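/- arXiv:0903.3975 — 3 statements merged into one kernel-verified Lean document; each statement's English description precedes it below -/
import Mathlib

section
/- Let u : ℝ^N → ℝ≥0 be radially symmetric and radially nonincreasing (u(x) = h(|x|) with h nonincreasing) with u ∈ L^p(ℝ^N), ‖u‖_{L^p} ≤ M. Then u(x) ≤ c |x|^{−N/p} for all x ≠ 0, where c = M (ω_N/N)^{−1/p} and ω_N is the surface measure of the unit sphere (i.e., c depends only on M, N, p). -/
open MeasureTheory

/-- Radial decay estimate: a radially nonincreasing nonnegative `u` with
`‖u‖_{L^p} ≤ M` satisfies `u(x) ≤ c |x|^{-N/p}` with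
`c = M · (vol B(0,1))^{-1/p}` depending only on `M`, `N`, `p`. -/
theorem stmt16 {N : ℕ} (hN : 0 < N) (p M : ℝ) (hp : 1 < p) (hM : 0 ≤ M)
    (u : EuclideanSpace ℝ (Fin N) → ℝ) (hmeas : Measurable u)
    (hnn : ∀ x, 0 ≤ u x)
    (h : ℝ → ℝ) (hrad : ∀ x, u x = h ‖x‖) (hmono : AntitoneOn h (Set.Ici 0))
    (hint : Integrable (fun x => u x ^ p) volume)
    (hLp : ∫ x, u x ^ p ≤ M ^ p) :
    ∀ x : EuclideanSpace ℝ (Fin N), x ≠ 0 →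
      u x ≤ (M * (volume (Metric.ball (0 : EuclideanSpace ℝ (Fin N)) 1)).toReal
        ^ (-(1 : ℝ) / p)) * ‖x‖ ^ (-(N : ℝ) / p) := by
  intro x hx
  have hp0 : (0:ℝ) < p := lt_trans one_pos hp
  set r : ℝ := ‖x‖ with hr
  have hr0 : 0 < r := norm_pos_iff.mpr hx
  set B := Metric.ball (0 : EuclideanSpace ℝ (Fin N)) r with hB
  set V : ℝ := (volume (Metric.ball (0 : EuclideanSpace ℝ (Fin N)) 1)).toReal with hV
  have hV0 : 0 < V :=
    ENNReal.toReal_pos (ne_of_gt (Metric.measure_ball_pos _ _ one_pos)) measure_ball_lt_top.ne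
  haveI : Nontrivial (EuclideanSpace ℝ (Fin N)) :=
    Module.nontrivial_of_finrank_pos (R := ℝ) (by rw [finrank_euclideanSpace_fin]; exact hN)
  have hfr : Module.finrank ℝ (EuclideanSpace ℝ (Fin N)) = N := finrank_euclideanSpace_fin
  have hvolB : (volume B).toReal = r ^ (N:ℝ) * V := by
    rw [hB, Measure.addHaar_ball _ _ hr0.le, hfr, ENNReal.toReal_mul,
      ENNReal.toReal_ofReal (by positivity), ← Real.rpow_natCast r N]
  -- pointwise lower bound on the ball
  have h1 : ∀ y ∈ B, u x ^ p ≤ u y ^ p := by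
    intro y hy
    have hyr : ‖y‖ ≤ r := by
      have := Metric.mem_ball.mp hy
      simpa [dist_zero_right] using this.le
    have : u x ≤ u y := by
      rw [hrad x, hrad y]
      exact hmono (Set.mem_Ici.mpr (norm_nonneg y)) (Set.mem_Ici.mpr hr0.le) hyr
    exact Real.rpow_le_rpow (hnn x) this hp0.le
  have h2 : ∫ _ in B, u x ^ p ≤ ∫ y in B, u y ^ p :=
    setIntegral_mono_on ((integrableOn_const_iff).mpr (Or.inr measure_ball_lt_top))
      hint.integrableOn measurableSet_ball h1
  have h3 : ∫ y in B, u y ^ p ≤ ∫ y, u y ^ p :=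
    setIntegral_le_integral hint
      (Filter.Eventually.of_forall fun y => Real.rpow_nonneg (hnn y) p)
  have key : u x ^ p * (r ^ (N:ℝ) * V) ≤ M ^ p := by
    have h0 : ∫ _ in B, u x ^ p = u x ^ p * (r ^ (N:ℝ) * V) := by
      rw [setIntegral_const, smul_eq_mul, measureReal_def, hvolB, mul_comm]
    calc u x ^ p * (r ^ (N:ℝ) * V) = ∫ _ in B, u x ^ p := h0.symm
      _ ≤ ∫ y in B, u y ^ p := h2
      _ ≤ ∫ y, u y ^ p := h3
      _ ≤ M ^ p := hLp
  -- conclude via taking p-th roots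
  have hc : 0 ≤ M * V ^ (-(1:ℝ)/p) * r ^ (-(N:ℝ)/p) := by positivity
  have hpow : u x ^ p ≤ (M * V ^ (-(1:ℝ)/p) * r ^ (-(N:ℝ)/p)) ^ p := by
    have hexp : (M * V ^ (-(1:ℝ)/p) * r ^ (-(N:ℝ)/p)) ^ p
        = M ^ p * V ^ (-(1:ℝ)) * r ^ (-(N:ℝ)) := by
      rw [Real.mul_rpow (by positivity) (by positivity),
        Real.mul_rpow hM (by positivity), ← Real.rpow_mul hV0.le,
        ← Real.rpow_mul hr0.le, div_mul_cancel₀ _ hp0.ne', div_mul_cancel₀ _ hp0.ne']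
    rw [hexp, Real.rpow_neg hV0.le, Real.rpow_neg hr0.le, Real.rpow_one]
    have hd : u x ^ p ≤ M ^ p / (r ^ (N:ℝ) * V) := (le_div_iff₀ (by positivity)).mpr key
    calc u x ^ p ≤ M ^ p / (r ^ (N:ℝ) * V) := hd
      _ = M ^ p * V⁻¹ * (r ^ (N:ℝ))⁻¹ := by ring
  calc u x = (u x ^ p) ^ p⁻¹ := (Real.rpow_rpow_inv (hnn x) hp0.ne').symm
    _ ≤ ((M * V ^ (-(1:ℝ)/p) * r ^ (-(N:ℝ)/p)) ^ p) ^ p⁻¹ :=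
        Real.rpow_le_rpow (Real.rpow_nonneg (hnn x) p) hpow (by positivity)
    _ = M * V ^ (-(1:ℝ)/p) * r ^ (-(N:ℝ)/p) := Real.rpow_rpow_inv hc hp0.ne'
end

section
/- Let p > 1, F : ℝ₊ × ℝ₊^m → ℝ measurable in r and continuous in s, and suppose that F(r, s)/(∑_k s_k^p) → 0 as r → ∞ and s → 0⁺ simultaneously (condition (4.10)). Let (u^h) be radial nonincreasing nonnegative functions bounded in L^p componentwise with the uniform decay u_k^h(x) ≤ c_k |x|^{−N/p}. Then for every ε > 0 there exists ρ_ε > 0 such that for all h, |∫_{|x| ≥ ρ_ε} F(|x|, u₁^h(x),…,u_m^h(x)) dx| ≤ ε ∑_{k=1}^m ‖u_k^h‖_{L^p}^p. -/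
open MeasureTheory Finset

/-- Uniform tail estimate: condition (4.10) on `F` together with the uniform decay
`u_k^h(x) ≤ c_k |x|^{-N/p}` gives, for every `ε > 0`, a radius `ρ_ε` such that the
integral of `F(|x|, u^h)` over `{|x| ≥ ρ_ε}` is at most `ε ∑_k ‖u_k^h‖_{L^p}^p`. -/
theorem stmt17 {N m : ℕ} (hN : 0 < N) (hm : 0 < m) (p : ℝ) (hp : 1 < p)
    (F : ℝ → (Fin m → ℝ) → ℝ)
    (hF : ∀ ε > (0 : ℝ), ∃ R > (0 : ℝ), ∃ δ > (0 : ℝ), ∀ r ≥ R, ∀ s : Fin m → ℝ,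
      (∀ k, 0 ≤ s k) → (∀ k, s k ≤ δ) → |F r s| ≤ ε * ∑ k, s k ^ p)
    (u : ℕ → Fin m → EuclideanSpace ℝ (Fin N) → ℝ)
    (hunn : ∀ h k x, 0 ≤ u h k x)
    (c : Fin m → ℝ)
    (hdecay : ∀ h k (x : EuclideanSpace ℝ (Fin N)), x ≠ 0 →
      u h k x ≤ c k * ‖x‖ ^ (-(N : ℝ) / p))
    (hmeasF : ∀ h, AEStronglyMeasurable
      (fun x : EuclideanSpace ℝ (Fin N) => F ‖x‖ (fun k => u h k x)) volume)
    (hintp : ∀ h k, Integrable (fun x => u h k x ^ p) volume) :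
    ∀ ε > (0 : ℝ), ∃ ρ > (0 : ℝ), ∀ h,
      |∫ x in {x : EuclideanSpace ℝ (Fin N) | ρ ≤ ‖x‖}, F ‖x‖ (fun k => u h k x)| ≤
        ε * ∑ k, ∫ x, u h k x ^ p := by
  intro ε hε
  obtain ⟨R, hR, δ, hδ, hFbound⟩ := hF ε hε
  -- a uniform bound on the coefficients
  set M : ℝ := (Finset.univ.sup' (by simp [Finset.univ_nonempty_iff, ← Fin.pos_iff_nonempty, hm]) c) ⊔ 0 with hM
  have hM0 : 0 ≤ M := le_sup_right
  have hcM : ∀ k, c k ≤ M := fun k =>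
    le_trans (Finset.le_sup' c (Finset.mem_univ k)) le_sup_left
  -- choose ρ₀ so that M * ρ^{-N/p} ≤ δ for ρ ≥ ρ₀
  have hexp : 0 < (N : ℝ) / p := div_pos (by exact_mod_cast hN) (lt_trans one_pos hp)
  have htend : Filter.Tendsto (fun x : ℝ => M * x ^ (-((N : ℝ) / p))) Filter.atTop (nhds 0) := by
    simpa using (tendsto_rpow_neg_atTop hexp).const_mul M
  obtain ⟨ρ₀, hρ₀⟩ := (htend.eventually_le_const hδ).exists_forall_of_atTop
  refine ⟨max R (max ρ₀ 1), lt_of_lt_of_le hR (le_max_left _ _), fun h => ?_⟩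
  set ρ := max R (max ρ₀ 1) with hρdef
  have hρpos : 0 < ρ := lt_of_lt_of_le hR (le_max_left _ _)
  set S : Set (EuclideanSpace ℝ (Fin N)) := {x | ρ ≤ ‖x‖} with hS
  have hSmeas : MeasurableSet S := (isClosed_le continuous_const continuous_norm).measurableSet
  -- the pointwise bound on S
  have hptwise : ∀ x ∈ S, |F ‖x‖ (fun k => u h k x)| ≤ ε * ∑ k, u h k x ^ p := by
    intro x hx
    have hxρ : ρ ≤ ‖x‖ := hx
    have hxpos : 0 < ‖x‖ := lt_of_lt_of_le hρpos hxρ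
    have hxne : x ≠ 0 := by
      intro hx0; rw [hx0] at hxpos; simp at hxpos
    refine hFbound ‖x‖ (le_trans (le_max_left _ _) hxρ) _ (fun k => hunn h k x) (fun k => ?_)
    have h1 : u h k x ≤ c k * ‖x‖ ^ (-(N : ℝ) / p) := hdecay h k x hxne
    have h2 : c k * ‖x‖ ^ (-(N : ℝ) / p) ≤ M * ‖x‖ ^ (-(N : ℝ) / p) :=
      mul_le_mul_of_nonneg_right (hcM k) (Real.rpow_nonneg hxpos.le _)
    have h3 : ‖x‖ ^ (-(N : ℝ) / p) ≤ ρ ^ (-(N : ℝ) / p) :=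
      Real.rpow_le_rpow_of_nonpos hρpos hxρ
        (by rw [neg_div]; exact neg_nonpos.mpr hexp.le)
    have h4 : M * ‖x‖ ^ (-(N : ℝ) / p) ≤ M * ρ ^ (-(N : ℝ) / p) :=
      mul_le_mul_of_nonneg_left h3 hM0
    have h5 : M * ρ ^ (-(N : ℝ) / p) ≤ δ := by
      have := hρ₀ ρ (le_trans (le_max_left _ _) (le_max_right R _))
      simpa [neg_div] using this
    exact le_trans h1 (le_trans h2 (le_trans h4 h5))
  -- the dominating function is integrable
  have hgint : Integrable (fun x => ε * ∑ k, u h k x ^ p) (volume.restrict S) := by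
    exact (integrable_finset_sum _ fun k _ => (hintp h k).restrict).const_mul ε
  calc |∫ x in S, F ‖x‖ (fun k => u h k x)|
      ≤ ∫ x in S, |F ‖x‖ (fun k => u h k x)| := by
        simpa [Real.norm_eq_abs] using
          norm_integral_le_integral_norm (μ := volume.restrict S)
            (f := fun x => F ‖x‖ (fun k => u h k x))
    _ ≤ ∫ x in S, ε * ∑ k, u h k x ^ p := by
        refine integral_mono_of_nonneg ?_ hgint ?_
        · exact Filter.Eventually.of_forall fun x => abs_nonneg _
        · exact (ae_restrict_iff' hSmeas).mpr (Filter.Eventually.of_forall hptwise)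
    _ = ε * ∑ k, ∫ x in S, u h k x ^ p := by
        rw [integral_const_mul, integral_finset_sum]
        exact fun k _ => (hintp h k).restrict
    _ ≤ ε * ∑ k, ∫ x, u h k x ^ p := by
        refine mul_le_mul_of_nonneg_left (Finset.sum_le_sum fun k _ => ?_) hε.le
        exact setIntegral_le_integral (hintp h k)
          (Filter.Eventually.of_forall fun x =>
            Real.rpow_nonneg (hunn h k x) p)
end

section
/- Let p > 1 and G : ℝ → ℝ≥0 be continuous with G(s) ≥ γ|s|^p for some γ > 0 and all s. If (u^h) ⊂ L^p(ℝ^N) satisfies u^h → u a.e., G(u^h) ∈ L¹ with ∫ G(u^h) dx = ∫ G(u) dx < ∞ for all h, then u^h → u strongly in L^p(ℝ^N). -/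
open MeasureTheory Filter
open scoped ENNReal

/-- Compactness upgrade: if `G ≥ γ|s|^p`, `u^h → u` a.e. and
`∫ G(u^h) = ∫ G(u) < ∞` for all `h`, then `u^h → u` strongly in `L^p(ℝ^N)`. -/
theorem stmt18 {N : ℕ} (p γ : ℝ) (hp : 1 < p) (hγ : 0 < γ)
    (G : ℝ → ℝ) (hGc : Continuous G) (hGnn : ∀ s, 0 ≤ G s)
    (hGlb : ∀ s : ℝ, γ * |s| ^ p ≤ G s)
    (u : ℕ → EuclideanSpace ℝ (Fin N) → ℝ) (v : EuclideanSpace ℝ (Fin N) → ℝ)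
    (hmeas : ∀ h, AEStronglyMeasurable (u h) volume)
    (hvmeas : AEStronglyMeasurable v volume)
    (hae : ∀ᵐ x ∂volume, Tendsto (fun h => u h x) atTop (nhds (v x)))
    (hGint : ∀ h, Integrable (fun x => G (u h x)) volume)
    (hGvint : Integrable (fun x => G (v x)) volume)
    (heq : ∀ h, ∫ x, G (u h x) = ∫ x, G (v x)) :
    Tendsto (fun h => ∫ x, |u h x - v x| ^ p) atTop (nhds 0) := by
  have hp0 : (0 : ℝ) < p := lt_trans one_pos hp
  -- the continuous map t ↦ |t|^p
  have hφc : Continuous (fun t : ℝ => |t| ^ p) :=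
    continuous_abs.rpow_const (fun x => Or.inr hp0.le)
  have hφnn : ∀ t : ℝ, 0 ≤ |t| ^ p := fun t => Real.rpow_nonneg (abs_nonneg t) _
  -- the key pointwise bound
  set c : ℝ := (2 : ℝ) ^ p / γ with hc
  have hc0 : 0 ≤ c := div_nonneg (Real.rpow_nonneg (by norm_num) _) hγ.le
  have key : ∀ a b : ℝ, |a - b| ^ p ≤ c * (G a + G b) := by
    intro a b
    have h1 : |a - b| ≤ 2 * max |a| |b| := by
      calc |a - b| ≤ |a| + |b| := abs_sub a b
        _ ≤ max |a| |b| + max |a| |b| := add_le_add (le_max_left _ _) (le_max_right _ _)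
        _ = 2 * max |a| |b| := (two_mul _).symm
    have h2 : |a - b| ^ p ≤ (2 : ℝ) ^ p * (max |a| |b|) ^ p := by
      have := Real.rpow_le_rpow (abs_nonneg _) h1 hp0.le
      rwa [Real.mul_rpow (by norm_num) (le_max_iff.mpr (Or.inl (abs_nonneg a)))] at this
    have h3 : (max |a| |b|) ^ p ≤ |a| ^ p + |b| ^ p := by
      rcases max_cases |a| |b| with ⟨h, _⟩ | ⟨h, _⟩ <;> rw [h]
      · exact le_add_of_nonneg_right (hφnn b)
      · exact le_add_of_nonneg_left (hφnn a)
    have h4 : γ * (|a| ^ p + |b| ^ p) ≤ G a + G b := by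
      rw [mul_add]; exact add_le_add (hGlb a) (hGlb b)
    calc |a - b| ^ p ≤ (2 : ℝ) ^ p * (|a| ^ p + |b| ^ p) := by
          refine h2.trans ?_
          exact mul_le_mul_of_nonneg_left h3 (Real.rpow_nonneg (by norm_num) _)
      _ = c * (γ * (|a| ^ p + |b| ^ p)) := by
          rw [hc, ← mul_assoc, div_mul_cancel₀ _ hγ.ne']
      _ ≤ c * (G a + G b) := mul_le_mul_of_nonneg_left h4 hc0
  -- pass to ℝ≥0∞
  set C : ℝ≥0∞ := ENNReal.ofReal c with hC
  have hCtop : C ≠ ∞ := ENNReal.ofReal_ne_top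
  set g : ℕ → EuclideanSpace ℝ (Fin N) → ℝ≥0∞ :=
    fun h x => ENNReal.ofReal (G (u h x)) with hg
  set gv : EuclideanSpace ℝ (Fin N) → ℝ≥0∞ := fun x => ENNReal.ofReal (G (v x)) with hgv
  set f : ℕ → EuclideanSpace ℝ (Fin N) → ℝ≥0∞ :=
    fun h x => ENNReal.ofReal (|u h x - v x| ^ p) with hf
  have hgm : ∀ h, AEMeasurable (g h) volume := fun h =>
    ((hGc.comp_aestronglyMeasurable (hmeas h)).aemeasurable).ennreal_ofReal
  have hgvm : AEMeasurable gv volume :=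
    ((hGc.comp_aestronglyMeasurable hvmeas).aemeasurable).ennreal_ofReal
  have hsubm : ∀ h, AEStronglyMeasurable (fun x => |u h x - v x| ^ p) volume := fun h =>
    hφc.comp_aestronglyMeasurable ((hmeas h).sub hvmeas)
  have hfm : ∀ h, AEMeasurable (f h) volume := fun h => (hsubm h).aemeasurable.ennreal_ofReal
  -- pointwise domination
  have hdom : ∀ h x, f h x ≤ C * (g h x + gv x) := by
    intro h x
    calc f h x ≤ ENNReal.ofReal (c * (G (u h x) + G (v x))) :=
          ENNReal.ofReal_le_ofReal (key _ _)
      _ = C * (g h x + gv x) := by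
          rw [ENNReal.ofReal_mul hc0, ENNReal.ofReal_add (hGnn _) (hGnn _)]
  -- integrals of G
  set I : ℝ≥0∞ := ∫⁻ x, gv x with hI
  have hIval : I = ENNReal.ofReal (∫ x, G (v x)) :=
    (ofReal_integral_eq_lintegral_ofReal hGvint
      (Filter.Eventually.of_forall fun x => hGnn _)).symm
  have hItop : I ≠ ∞ := by rw [hIval]; exact ENNReal.ofReal_ne_top
  have hIg : ∀ h, ∫⁻ x, g h x = I := by
    intro h
    rw [hIval, ← heq h]
    exact (ofReal_integral_eq_lintegral_ofReal (hGint h)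
      (Filter.Eventually.of_forall fun x => hGnn _)).symm
  set A : ℝ≥0∞ := C * (I + I) with hA
  have hAtop : A ≠ ∞ := ENNReal.mul_ne_top hCtop (ENNReal.add_ne_top.mpr ⟨hItop, hItop⟩)
  -- lintegral of the dominator
  have hDint : ∀ h, ∫⁻ x, C * (g h x + gv x) = A := by
    intro h
    rw [lintegral_const_mul' C _ hCtop, lintegral_add_left' (hgm h), hIg h]
  set b : ℕ → ℝ≥0∞ := fun h => ∫⁻ x, f h x with hb
  have hbA : ∀ h, b h ≤ A := by
    intro h
    rw [← hDint h]
    exact lintegral_mono fun x => hdom h x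
  have hbtop : ∀ h, b h ≠ ∞ := fun h => ne_top_of_le_ne_top hAtop (hbA h)
  -- a.e. convergence of w h x := C*(g h x + gv x) - f h x to C*(gv x + gv x)
  have hwlim : ∀ᵐ x ∂(volume : Measure (EuclideanSpace ℝ (Fin N))),
      Tendsto (fun h => C * (g h x + gv x) - f h x) atTop (nhds (C * (gv x + gv x))) := by
    filter_upwards [hae] with x hx
    have hgl : Tendsto (fun h => g h x) atTop (nhds (gv x)) :=
      (ENNReal.continuous_ofReal.tendsto _).comp ((hGc.tendsto _).comp hx)
    have hfl : Tendsto (fun h => f h x) atTop (nhds 0) := by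
      have h1 : Tendsto (fun h => u h x - v x) atTop (nhds 0) := by
        simpa using hx.sub (tendsto_const_nhds (x := v x))
      have h2 : Tendsto (fun h => |u h x - v x| ^ p) atTop (nhds 0) := by
        have := (hφc.tendsto 0).comp h1
        simpa [Real.zero_rpow hp0.ne', Function.comp_def] using this
      simpa [Function.comp_def, hf] using (ENNReal.continuous_ofReal.tendsto 0).comp h2
    have hCm : Tendsto (fun h => C * (g h x + gv x)) atTop (nhds (C * (gv x + gv x))) :=
      ENNReal.Tendsto.const_mul (hgl.add tendsto_const_nhds)
        (Or.inr hCtop)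
    have := ENNReal.Tendsto.sub hCm hfl (Or.inr ENNReal.zero_ne_top)
    simpa using this
  -- Fatou
  have hwm : ∀ h, AEMeasurable (fun x => C * (g h x + gv x) - f h x) volume := fun h =>
    (((hgm h).add hgvm).const_mul C).sub (hfm h)
  have hFatou := lintegral_liminf_le' (μ := (volume : Measure (EuclideanSpace ℝ (Fin N)))) (u := atTop) hwm
  -- compute the left side of Fatou
  have hLHS : ∫⁻ x, Filter.liminf (fun h => C * (g h x + gv x) - f h x) atTop = A := by
    have : ∫⁻ x, Filter.liminf (fun h => C * (g h x + gv x) - f h x) atTop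
        = ∫⁻ x, C * (gv x + gv x) := by
      refine lintegral_congr_ae ?_
      filter_upwards [hwlim] with x hx
      exact hx.liminf_eq
    rw [this, lintegral_const_mul' C _ hCtop, lintegral_add_left' hgvm, hA]
  -- compute the right side of Fatou
  have hRHS : Filter.liminf (fun h => ∫⁻ x, (C * (g h x + gv x) - f h x)) atTop
      = A - Filter.limsup b atTop := by
    have heach : ∀ h, ∫⁻ x, (C * (g h x + gv x) - f h x) = A - b h := by
      intro h
      rw [lintegral_sub' (hfm h) (hbtop h) (Filter.Eventually.of_forall (hdom h)), hDint h]
    simp only [heach]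
    exact ENNReal.liminf_const_sub atTop b hAtop
  rw [hLHS, hRHS] at hFatou
  -- conclude limsup b = 0
  have hLA : Filter.limsup b atTop ≤ A := by
    calc Filter.limsup b atTop ≤ Filter.limsup (fun _ : ℕ => A) atTop :=
          Filter.limsup_le_limsup (Filter.Eventually.of_forall hbA)
      _ = A := Filter.limsup_const A
  have hL0 : Filter.limsup b atTop = 0 := by
    have h1 : A + Filter.limsup b atTop ≤ A + 0 := by
      calc A + Filter.limsup b atTop ≤ (A - Filter.limsup b atTop) + Filter.limsup b atTop :=
            add_le_add_left hFatou _
        _ = A := tsub_add_cancel_of_le hLA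
        _ = A + 0 := (add_zero A).symm
    exact le_antisymm (ENNReal.le_of_add_le_add_left hAtop h1) zero_le
  have hl0 : Filter.liminf b atTop = 0 :=
    le_antisymm (le_trans (liminf_le_limsup) hL0.le) zero_le
  have hbt : Tendsto b atTop (nhds 0) := tendsto_of_liminf_eq_limsup hl0 hL0
  -- transfer back to real integrals
  have hfin : ∀ h, ∫ x, |u h x - v x| ^ p = (b h).toReal := by
    intro h
    exact integral_eq_lintegral_of_nonneg_ae
      (Filter.Eventually.of_forall fun x => hφnn _) (hsubm h)
  have : Tendsto (fun h => (b h).toReal) atTop (nhds ((0 : ℝ≥0∞).toReal)) :=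
    (ENNReal.tendsto_toReal ENNReal.zero_ne_top).comp hbt
  simpa [hfin] using this
end
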